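/- Let h : ℕ → ℝ, α : ℕ → ℝ, and α_min ∈ (0,1) be such that α_min ≤ α k and α k < 1 for all k ≥ 1. If the non-strict discrete-time barrier constraint h k - h (k-1) + (α k) * h (k-1) ≥ 0 holds for every k ≥ 1, then for every k ∈ ℕ, max (-(h k)) 0 ≤ (1 - α_min)^k * (max (-(h 0)) 0), and consequently max (-(h k)) 0 tends to 0 as k → ∞; i.e., from any initial (possibly unsafe) barrier value the trajectory asymptotically converges to the safe set {h ≥ 0}. (Theorem 2.) -/

import Mathlib

/-! The barrier constraint reads `h k ≥ (1 - α k) * h (k - 1)` with `0 ≤ 1 - α k ≤ 1 - αmin`,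
so the negative part `max (-(h k)) 0` contracts by the factor `1 - αmin < 1` at every step. -/

section NegativePart

variable {R : Type*} [Ring R] [LinearOrder R] [IsStrictOrderedRing R]

theorem max_neg_zero_le_mul_of_mul_le {c x y : R} (hc : 0 ≤ c) (hxy : c * x ≤ y) :
    max (-y) 0 ≤ c * max (-x) 0 := by
  refine max_le ?_ (mul_nonneg hc (le_max_right _ _))
  calc -y ≤ c * -x := by rw [mul_neg]; exact neg_le_neg hxy
    _ ≤ c * max (-x) 0 := mul_le_mul_of_nonneg_left (le_max_left _ _) hc

theorem max_neg_zero_le_of_barrier {a b x y : R} (hba : b ≤ a) (ha : a ≤ 1)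
    (hbar : y - x + a * x ≥ 0) : max (-y) 0 ≤ (1 - b) * max (-x) 0 :=
  calc max (-y) 0 ≤ (1 - a) * max (-x) 0 :=
        max_neg_zero_le_mul_of_mul_le (sub_nonneg.2 ha) <| by
          rw [show (1 - a) * x = y - (y - x + a * x) by noncomm_ring]
          exact sub_le_self y hbar
    _ ≤ (1 - b) * max (-x) 0 :=
        mul_le_mul_of_nonneg_right (sub_le_sub_left hba 1) (le_max_right _ _)

end NegativePart

/-- Theorem 2: geometric decay of the distance-to-safety `max (-(h k)) 0`
and asymptotic convergence to the safe set `{h ≥ 0}`. -/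
theorem barrier_asymptotic_convergence_to_safe_set
    (h α : ℕ → ℝ) (αmin : ℝ)
    (hαmin : αmin ∈ Set.Ioo (0 : ℝ) 1)
    (hα : ∀ k, 1 ≤ k → αmin ≤ α k ∧ α k < 1)
    (hbar : ∀ k, 1 ≤ k → h k - h (k - 1) + α k * h (k - 1) ≥ 0) :
    (∀ k, max (-(h k)) 0 ≤ (1 - αmin) ^ k * max (-(h 0)) 0) ∧
    Filter.Tendsto (fun k => max (-(h k)) 0) Filter.atTop (nhds 0) := by
  obtain ⟨hαmin_pos, hαmin_lt_one⟩ := hαmin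
  have decay : ∀ k, max (-(h k)) 0 ≤ (1 - αmin) ^ k * max (-(h 0)) 0 := fun k =>
    le_geom (u := fun k => max (-(h k)) 0) (sub_nonneg.2 hαmin_lt_one.le) k fun j _ =>
      max_neg_zero_le_of_barrier (hα (j + 1) j.succ_pos).1 (hα (j + 1) j.succ_pos).2.le
        (hbar (j + 1) j.succ_pos)
  refine ⟨decay, squeeze_zero (fun k => le_max_right _ _) decay ?_⟩
  simpa using (tendsto_pow_atTop_nhds_zero_of_lt_one (by linarith) (by linarith)).mul_const
    (max (-(h 0)) 0)
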